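/- arXiv:2507.19447 — 2 statements merged into one kernel-verified Lean document; each statement's English description precedes it below -/
import Mathlib

section
/- Let T be a trace on H_c. If the integer q is not divisible by m = n/2, then T(e_q h) = 0. -/
noncomputable section

open Polynomial

/-- The primitive `n`-th root of unity `ε = exp(2πi/n)`. -/
def eps (n : ℕ) : ℂ := Complex.exp (2 * Real.pi * Complex.I / n)

/-- The constants `α_q = (1/c_0) Σ_{i=1}^{n-1} c_i ε^{-iq}/(ε^i − 1)`. -/
def alphaOf (n : ℕ) (c : ℤ → ℂ) (q : ℤ) : ℂ :=
  (c 0)⁻¹ * ∑ i ∈ Finset.Ico 1 n, c (i : ℤ) * eps n ^ (-(i : ℤ) * q) / (eps n ^ (i : ℕ) - 1)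

/-- The algebra `H_c = (ℂ[x,y] # 𝔻_n)/(xy − yx − c)` for the dicyclic group `𝔻_n`,
presented by its generators, relations, and PBW basis. -/
structure HcSetup (n : ℕ) where
  hn : 0 < n
  heven : Even n
  H : Type
  [ring : Ring H]
  [alg : Algebra ℂ H]
  x : H
  y : H
  g : H
  h : H
  c : ℤ → ℂ
  c_per : ∀ i : ℤ, c (i + n) = c i
  c_symm : ∀ i : ℤ, c (-i) = c i
  c0_ne : c 0 ≠ 0
  rel_gx : g * x = eps n • (x * g)
  rel_gy : g * y = (eps n)⁻¹ • (y * g)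
  rel_hx : h * x = y * h
  rel_hy : h * y = -(x * h)
  rel_comm : x * y - y * x = ∑ i ∈ Finset.range n, c (i : ℤ) • g ^ i
  rel_gn : g ^ n = 1
  rel_h2 : h ^ 2 = g ^ (n / 2)
  rel_hg : h * g = g ^ (n - 1) * h
  basis : Module.Basis (ℕ × ℕ × Fin n × Fin 2) ℂ H
  basis_eq : ∀ p : ℕ × ℕ × Fin n × Fin 2,
    basis p = x ^ p.1 * y ^ p.2.1 * g ^ (p.2.2.1 : ℕ) * h ^ (p.2.2.2 : ℕ)

attribute [instance] HcSetup.ring HcSetup.alg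

namespace HcSetup

variable {n : ℕ}

/-- `k = (1/c_0)(xy + Σ_{i=1}^{n-1} c_i g^i/(ε^i − 1)) − 1/2`. -/
def k (S : HcSetup n) : S.H :=
  (S.c 0)⁻¹ • (S.x * S.y + ∑ i ∈ Finset.Ico 1 n, (S.c (i : ℤ) / (eps n ^ (i : ℕ) - 1)) • S.g ^ i)
    - (2 : ℂ)⁻¹ • (1 : S.H)

/-- `e_q = (1/n) Σ_{i=0}^{n-1} ε^{iq} g^i`. -/
def e (S : HcSetup n) (q : ℤ) : S.H :=
  (n : ℂ)⁻¹ • ∑ i ∈ Finset.range n, eps n ^ ((i : ℤ) * q) • S.g ^ i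

/-- `α_q = (1/c_0) Σ_{i=1}^{n-1} c_i ε^{-iq}/(ε^i − 1)`. -/
def αc (S : HcSetup n) (q : ℤ) : ℂ := alphaOf n S.c q

end HcSetup

/-- A trace on an algebra: a linear map with `T(ab) = T(ba)`. -/
def IsTrace {n : ℕ} (S : HcSetup n) (T : S.H →ₗ[ℂ] ℂ) : Prop :=
  ∀ a b : S.H, T (a * b) = T (b * a)

/-!
Since `h g = g⁻¹ h`, the trace satisfies `T(g^{i+2} h) = T(g · g^{i+1} h) = T(g^{i+1} h · g) = T(g^i h)`.
Hence the summand `f i = ε^{iq} T(gⁱ h)` of `n · T(e_q h) = ∑_{i<n} f i` satisfies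
`f (i + 2) = ε^{2q} f i`, and it is `n`-periodic. Shifting the summation index by two therefore
multiplies the sum by `ε^{2q}`, which is not `1` because `n ∤ 2q`; so the sum vanishes.
-/

open Finset Function

theorem Function.Periodic.sum_range_comp_add_one {M : Type*} [AddCommMonoid M] {f : ℕ → M}
    {n : ℕ} (hf : Periodic f n) :
    ∑ i ∈ range n, f (i + 1) = ∑ i ∈ range n, f i := by
  cases n with
  | zero => rfl
  | succ n =>
    rw [sum_range_succ, sum_range_succ' f n]
    congr 1
    simpa using hf 0

theorem Function.Periodic.sum_range_comp_add {M : Type*} [AddCommMonoid M] {f : ℕ → M}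
    {n : ℕ} (hf : Periodic f n) (k : ℕ) :
    ∑ i ∈ range n, f (i + k) = ∑ i ∈ range n, f i := by
  induction k with
  | zero => rfl
  | succ k ih =>
    simp only [add_comm k 1, ← add_assoc]
    exact (hf.add_const k).sum_range_comp_add_one.trans ih

theorem Function.Periodic.sum_range_eq_zero_of_comp_add_eq_mul {R : Type*} [Ring R]
    [NoZeroDivisors R] {f : ℕ → R} {n k : ℕ} {a : R} (hf : Periodic f n)
    (hshift : ∀ i, f (i + k) = a * f i) (ha : a ≠ 1) :
    ∑ i ∈ range n, f i = 0 := by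
  have h := hf.sum_range_comp_add k
  simp only [hshift, ← mul_sum] at h
  exact (mul_left_eq_self₀.mp h).resolve_left ha

theorem periodic_zpow_natCast_mul {G : Type*} [DivisionMonoid G] {ζ : G} {n : ℕ}
    (hζ : ζ ^ n = 1) (q : ℤ) : Periodic (fun i : ℕ => ζ ^ ((i : ℤ) * q)) n := fun i => by
  simp only [zpow_mul, zpow_natCast, pow_add, hζ, mul_one]

theorem isPrimitiveRoot_eps {n : ℕ} (hn : n ≠ 0) : IsPrimitiveRoot (eps n) n :=
  Complex.isPrimitiveRoot_exp n hn

theorem eps_zpow_two_mul_ne_one {n : ℕ} (hn : n ≠ 0) (heven : Even n) {q : ℤ}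
    (hq : ¬ ((n / 2 : ℤ) ∣ q)) : eps n ^ (2 * q) ≠ 1 := by
  obtain ⟨m, rfl⟩ := heven
  rw [Ne, (isPrimitiveRoot_eps hn).zpow_eq_one_iff_dvd, Nat.cast_add, ← two_mul,
    mul_dvd_mul_iff_left two_ne_zero]
  simpa [← two_mul] using hq

namespace HcSetup

variable {n : ℕ} (S : HcSetup n)

theorem g_pow_mul_h_mul_g (i : ℕ) : S.g ^ (i + 1) * S.h * S.g = S.g ^ i * S.h := by
  have hn : n - 1 + 1 = n := Nat.sub_add_cancel S.hn
  calc S.g ^ (i + 1) * S.h * S.g = S.g ^ i * S.g ^ (n - 1 + 1) * S.h := by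
        rw [mul_assoc, S.rel_hg, ← mul_assoc, pow_succ, mul_assoc (S.g ^ i), ← pow_succ']
    _ = S.g ^ i * S.h := by rw [hn, S.rel_gn, mul_one]

theorem periodic_g_pow_mul_h (T : S.H →ₗ[ℂ] ℂ) : Periodic (fun i : ℕ => T (S.g ^ i * S.h)) n :=
  fun i => by simp only [pow_add, S.rel_gn, mul_one]

theorem trace_g_pow_add_two_mul_h {T : S.H →ₗ[ℂ] ℂ} (hT : IsTrace S T) (i : ℕ) :
    T (S.g ^ (i + 2) * S.h) = T (S.g ^ i * S.h) := by
  rw [pow_succ', mul_assoc, hT, S.g_pow_mul_h_mul_g]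

theorem trace_e_mul_h (T : S.H →ₗ[ℂ] ℂ) (q : ℤ) :
    T (S.e q * S.h) = (n : ℂ)⁻¹ * ∑ i ∈ range n, eps n ^ ((i : ℤ) * q) * T (S.g ^ i * S.h) := by
  simp only [e, smul_mul_assoc, sum_mul, map_smul, map_sum, smul_eq_mul]

end HcSetup

/-- if `T` is a trace on `H_c` and `m = n/2` does not divide `q`,
then `T(e_q h) = 0`. -/
theorem statement3 {n : ℕ} (S : HcSetup n) (T : S.H →ₗ[ℂ] ℂ) (hT : IsTrace S T)
    (q : ℤ) (hq : ¬ ((n / 2 : ℤ) ∣ q)) :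
    T (S.e q * S.h) = 0 := by
  have hε := isPrimitiveRoot_eps S.hn.ne'
  have hperiodic : Periodic (fun i : ℕ => eps n ^ ((i : ℤ) * q) * T (S.g ^ i * S.h)) n :=
    (periodic_zpow_natCast_mul hε.pow_eq_one q).mul (S.periodic_g_pow_mul_h T)
  have hshift : ∀ i, eps n ^ (((i + 2 : ℕ) : ℤ) * q) * T (S.g ^ (i + 2) * S.h)
      = eps n ^ (2 * q) * (eps n ^ ((i : ℤ) * q) * T (S.g ^ i * S.h)) := fun i => by
    rw [S.trace_g_pow_add_two_mul_h hT, Nat.cast_add, add_mul, zpow_add₀ (hε.ne_zero S.hn.ne')]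
    push_cast
    ring
  rw [S.trace_e_mul_h, hperiodic.sum_range_eq_zero_of_comp_add_eq_mul hshift
    (eps_zpow_two_mul_ne_one S.hn.ne' S.heven hq), mul_zero]
end
end

section
/- The polynomial 𝐏(X) = ∏_{q=0}^{n−1} (X − exp((2πi/n)(α_q − q − 1/2))) satisfies 𝐏(X) = X^n 𝐏(X⁻¹) (as an identity of rational functions, i.e., the reciprocal of each root of 𝐏 is again a root of 𝐏, with multiplicity). -/
/-!
The roots `r_q = exp ((2πi/n)(α_q - q - 1/2))` of `𝐏` come in reciprocal pairs
`r_q * r_{n-1-q} = 1`: by periodicity and the reflection `α_{-q-1} = -α_q` we get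
`α_{n-1-q} = -α_q`, and then the two exponents add up to `-2πi`. Hence
`X^n 𝐏(X⁻¹) = ∏ (1 - X r_q) = (∏ -r_q) 𝐏(X)`, and for even `n` the pairing `q ↦ n-1-q` has no
fixed point, so `∏ r_q = 1` and `(-1)^n = 1`.
-/

noncomputable section

open Polynomial

/-- The polynomial `𝐏(X) = ∏_{q=0}^{n-1} (X − exp((2πi/n)(α_q − q − 1/2)))`. -/
def Pbold (n : ℕ) (α : ℤ → ℂ) : Polynomial ℂ :=
  ∏ q ∈ Finset.range n,
    (X - C (Complex.exp (2 * Real.pi * Complex.I / n * (α (q : ℤ) - (q : ℂ) - 2⁻¹))))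

open Finset

section Reciprocal

variable {K : Type*} [Field K] {n : ℕ}

theorem prod_range_eq_one_of_mul_reflect_eq_one (he : Even n) {r : ℕ → K}
    (hr : ∀ q < n, r q * r (n - 1 - q) = 1) : ∏ q ∈ range n, r q = 1 :=
  prod_involution (fun q _ => n - 1 - q) (fun q hq => hr q (mem_range.mp hq))
    (fun q hq _ => by obtain ⟨k, rfl⟩ := he; have := mem_range.mp hq; omega)
    (fun q hq => by have := mem_range.mp hq; simp only [mem_range]; omega)
    (fun q hq => by have := mem_range.mp hq; omega)

theorem prod_sub_eq_pow_mul_prod_inv_sub (he : Even n) {r : ℕ → K}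
    (hr : ∀ q < n, r q * r (n - 1 - q) = 1) {z : K} (hz : z ≠ 0) :
    ∏ q ∈ range n, (z - r q) = z ^ n * ∏ q ∈ range n, (z⁻¹ - r q) := by
  have hinv : ∀ q ∈ range n, r (n - 1 - q) = (r q)⁻¹ := fun q hq =>
    (eq_inv_of_mul_eq_one_right (hr q (mem_range.mp hq)))
  calc ∏ q ∈ range n, (z - r q)
      = ∏ q ∈ range n, (z - r (n - 1 - q)) := (prod_range_reflect (fun q => z - r q) n).symm
    _ = (∏ q ∈ range n, (-1 : K)) * (∏ q ∈ range n, r q)⁻¹ * ∏ q ∈ range n, (1 - z * r q) := by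
        rw [← prod_inv_distrib, ← prod_mul_distrib, ← prod_mul_distrib]
        refine prod_congr rfl fun q hq => ?_
        have hq0 : r q ≠ 0 := left_ne_zero_of_mul_eq_one (hr q (mem_range.mp hq))
        rw [hinv q hq]
        field_simp
        ring
    _ = ∏ q ∈ range n, (z * (z⁻¹ - r q)) := by
        rw [prod_const, card_range, he.neg_one_pow, prod_range_eq_one_of_mul_reflect_eq_one he hr,
          inv_one, one_mul, one_mul]
        refine prod_congr rfl fun q _ => ?_
        rw [mul_sub, mul_inv_cancel₀ hz]
    _ = z ^ n * ∏ q ∈ range n, (z⁻¹ - r q) := by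
        rw [prod_mul_distrib, prod_const, card_range]

end Reciprocal

section Alpha

variable {n : ℕ}

theorem eps_isPrimitiveRoot (hn : 0 < n) : IsPrimitiveRoot (eps n) n := by
  simpa [eps] using Complex.isPrimitiveRoot_exp n hn.ne'

theorem eps_ne_zero (n : ℕ) : eps n ≠ 0 := Complex.exp_ne_zero _

theorem eps_zpow_add_natCast_mul (hn : 0 < n) (a m : ℤ) : eps n ^ (a + n * m) = eps n ^ a := by
  rw [zpow_add₀ (eps_ne_zero n), zpow_mul, zpow_natCast,
    (eps_isPrimitiveRoot hn).pow_eq_one, one_zpow, mul_one]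

theorem alphaOf_add_natCast (hn : 0 < n) (c : ℤ → ℂ) (q : ℤ) :
    alphaOf n c (q + n) = alphaOf n c q := by
  unfold alphaOf
  congr 2 with i
  rw [show -(i : ℤ) * (q + n) = -i * q + n * -i by ring, eps_zpow_add_natCast_mul hn]

theorem alphaOf_neg_sub_one (hn : 0 < n) {c : ℤ → ℂ}
    (hper : ∀ i : ℤ, c (i + n) = c i) (hsymm : ∀ i : ℤ, c (-i) = c i) (q : ℤ) :
    alphaOf n c (-q - 1) = -alphaOf n c q := by
  unfold alphaOf
  rw [← mul_neg, ← sum_neg_distrib]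
  congr 1
  refine sum_nbij' (n - ·) (n - ·) ?_ ?_ ?_ ?_ ?_ <;> simp only [mem_Ico]
  · intro i hi; omega
  · intro i hi; omega
  · intro i hi; omega
  · intro i hi; omega
  rintro i ⟨hi1, hin⟩
  have hcast : ((n - i : ℕ) : ℤ) = -i + n := by omega
  have hc : c ((n - i : ℕ) : ℤ) = c i := by rw [hcast, hper, hsymm]
  have hnum : eps n ^ (-((n - i : ℕ) : ℤ) * q) = eps n ^ ((i : ℤ) * q) := by
    rw [hcast, show -(-(i : ℤ) + n) * q = i * q + n * -q by ring, eps_zpow_add_natCast_mul hn]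
  have hden : eps n ^ (n - i : ℕ) = (eps n ^ i)⁻¹ := by
    rw [← zpow_natCast, hcast, show -(i : ℤ) + n = -i + n * 1 by ring,
      eps_zpow_add_natCast_mul hn, zpow_neg, zpow_natCast]
  have hlhs : eps n ^ (-(i : ℤ) * (-q - 1)) = eps n ^ ((i : ℤ) * q) * eps n ^ i := by
    rw [show -(i : ℤ) * (-q - 1) = i * q + i by ring, zpow_add₀ (eps_ne_zero n), zpow_natCast]
  have hpow : eps n ^ i ≠ 1 := (eps_isPrimitiveRoot hn).pow_ne_one_of_pos_of_lt (by omega) hin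
  have hpow0 : eps n ^ i ≠ 0 := pow_ne_zero _ (eps_ne_zero n)
  have hsub : eps n ^ i - 1 ≠ 0 := sub_ne_zero.mpr hpow
  have hsub' : (eps n ^ i)⁻¹ - 1 ≠ 0 := sub_ne_zero.mpr (inv_ne_one.mpr hpow)
  rw [hc, hnum, hden, hlhs]
  field_simp
  ring

theorem alphaOf_natCast_sub_one_sub (hn : 0 < n) {c : ℤ → ℂ}
    (hper : ∀ i : ℤ, c (i + n) = c i) (hsymm : ∀ i : ℤ, c (-i) = c i) (q : ℤ) :
    alphaOf n c (n - 1 - q) = -alphaOf n c q := by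
  rw [show (n : ℤ) - 1 - q = -q - 1 + n by ring, alphaOf_add_natCast hn,
    alphaOf_neg_sub_one hn hper hsymm]

end Alpha

section Pbold

variable {n : ℕ} {α : ℤ → ℂ}

def boldRoot (n : ℕ) (α : ℤ → ℂ) (q : ℕ) : ℂ :=
  Complex.exp (2 * Real.pi * Complex.I / n * (α (q : ℤ) - (q : ℂ) - 2⁻¹))

theorem eval_Pbold (n : ℕ) (α : ℤ → ℂ) (z : ℂ) :
    (Pbold n α).eval z = ∏ q ∈ range n, (z - boldRoot n α q) := by
  simp [Pbold, boldRoot, eval_prod]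

theorem boldRoot_mul_boldRoot_reflect (hn : 0 < n) (hα : ∀ q : ℤ, α (n - 1 - q) = -α q)
    {q : ℕ} (hq : q < n) : boldRoot n α q * boldRoot n α (n - 1 - q) = 1 := by
  have hn' : (n : ℂ) ≠ 0 := Nat.cast_ne_zero.mpr hn.ne'
  have hcast : ((n - 1 - q : ℕ) : ℤ) = n - 1 - q := by omega
  rw [boldRoot, boldRoot, ← Complex.exp_add, hcast, hα, Nat.cast_sub (by omega), Nat.cast_sub hn]
  -- the exponents add up to `-2πi`
  convert Complex.exp_int_mul_two_pi_mul_I (-1) using 2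
  push_cast
  field_simp
  ring

end Pbold

theorem statement6_general (n : ℕ) (hn : 0 < n) (he : Even n) (c : ℤ → ℂ)
    (hper : ∀ i : ℤ, c (i + n) = c i) (hsymm : ∀ i : ℤ, c (-i) = c i) :
    ∀ z : ℂ, z ≠ 0 →
      (Pbold n (alphaOf n c)).eval z = z ^ n * (Pbold n (alphaOf n c)).eval z⁻¹ := by
  intro z hz
  rw [eval_Pbold, eval_Pbold]
  exact prod_sub_eq_pow_mul_prod_inv_sub (r := boldRoot n (alphaOf n c)) he
    (fun q hq => boldRoot_mul_boldRoot_reflect hn (alphaOf_natCast_sub_one_sub hn hper hsymm) hq) hz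

/-- `𝐏(X) = X^n 𝐏(X⁻¹)` as an identity of rational functions. -/
theorem statement6 (n : ℕ) (hn : 0 < n) (he : Even n) (c : ℤ → ℂ)
    (hper : ∀ i : ℤ, c (i + n) = c i) (hsymm : ∀ i : ℤ, c (-i) = c i) (hc0 : c 0 ≠ 0) :
    ∀ z : ℂ, z ≠ 0 →
      (Pbold n (alphaOf n c)).eval z = z ^ n * (Pbold n (alphaOf n c)).eval z⁻¹ :=
  statement6_general n hn he c hper hsymm
end
end
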